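/- For integer c ≥ 1, the Hankel determinant det(ψ_{i+j}(x,c))_{i,j=0}^{n-1} = [c]^{C(n,2)} · x^{c·C(n,2)} · q^{c·C(n,3)} · product_{j=0}^{n-1} [j]_{q^c}!, where [j]_{q^c}! is the q^c-factorial. -/
import Mathlib


open Finset Matrix

/-- The q-integer `[n] = 1 + q + ... + q^(n-1)`. -/
def qint {R : Type*} [CommRing R] (q : R) (n : ℕ) : R := ∑ i ∈ Finset.range n, q ^ i

/-- The q-factorial `[n]! = [1][2]⋯[n]`. -/
def qfact {R : Type*} [CommRing R] (q : R) (n : ℕ) : R := ∏ i ∈ Finset.range n, qint q (i + 1)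

/-- The Gaussian binomial coefficient, via the q-Pascal recurrence. -/
def qbinom {R : Type*} [CommRing R] (q : R) : ℕ → ℕ → R
  | 0, 0 => 1
  | 0, _ + 1 => 0
  | _ + 1, 0 => 1
  | n + 1, k + 1 => qbinom q n k + q ^ (k + 1) * qbinom q n (k + 1)

/-- The q-Stirling numbers of the second kind:
`S[n,k] = S[n-1,k-1] + [k]·S[n-1,k]`, `S[0,k] = δ_{k0}`, `S[n,0] = δ_{n0}`. -/
def qStirling2 {R : Type*} [CommRing R] (q : R) : ℕ → ℕ → R
  | 0, 0 => 1
  | 0, _ + 1 => 0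
  | _ + 1, 0 => 0
  | n + 1, k + 1 => qStirling2 q n k + qint q (k + 1) * qStirling2 q n (k + 1)

/-- The q-Pochhammer symbol `(a;q)_m = ∏_{j<m} (1 - q^j a)`. -/
def qpoch {R : Type*} [CommRing R] (q a : R) (m : ℕ) : R := ∏ j ∈ Finset.range m, (1 - q ^ j * a)

section HankelAux

variable {R : Type*} [CommRing R] (Q : R)

lemma qint_add (a b : ℕ) : qint Q (a + b) = qint Q a + Q ^ a * qint Q b := by
  simp [qint, Finset.sum_range_add, pow_add, Finset.mul_sum]

lemma qbinom_zero_right (n : ℕ) : qbinom Q n 0 = 1 := by cases n <;> rfl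

lemma qbinom_eq_zero : ∀ {n k : ℕ}, n < k → qbinom Q n k = 0 := by
  intro n
  induction n with
  | zero => intro k hk; obtain ⟨k, rfl⟩ := Nat.exists_eq_add_of_lt hk; rfl
  | succ n ih =>
    intro k hk
    obtain ⟨m, rfl⟩ : ∃ m, k = m + 1 := ⟨k - 1, by omega⟩
    show qbinom Q n m + Q ^ (m+1) * qbinom Q n (m+1) = 0
    rw [ih (by omega), ih (by omega)]; ring

lemma qbinom_self : ∀ n : ℕ, qbinom Q n n = 1 := by
  intro n
  induction n with
  | zero => rfl
  | succ n ih =>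
    show qbinom Q n n + Q ^ (n+1) * qbinom Q n (n+1) = 1
    rw [ih, qbinom_eq_zero Q (by omega)]; ring

lemma qbinom_one (n : ℕ) : qbinom Q n 1 = qint Q n := by
  induction n with
  | zero => simp [qint]; rfl
  | succ n ih =>
    show qbinom Q n 0 + Q ^ 1 * qbinom Q n 1 = _
    rw [qbinom_zero_right, ih]
    have : qint Q (n + 1) = qint Q 1 + Q ^ 1 * qint Q n := by rw [← qint_add]; ring_nf
    rw [this]; simp [qint]

lemma qint_one' : qint Q 1 = 1 := by simp [qint]

lemma qbinom_succ_succ (n k : ℕ) :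
    qbinom Q (n+1) (k+1) = qbinom Q n k + Q ^ (k+1) * qbinom Q n (k+1) := rfl

lemma pascal2 : ∀ n k : ℕ, qbinom Q (n+1) (k+1) = qbinom Q n (k+1) + Q ^ (n-k) * qbinom Q n k := by
  intro n
  induction n with
  | zero =>
    intro k
    cases k with
    | zero => simp [qbinom]
    | succ k => simp [qbinom]
  | succ n ih =>
    intro k
    cases k with
    | zero =>
      rw [qbinom_succ_succ, qbinom_zero_right, qbinom_one]
      have h1 : qint Q (n + 1 + 1) = qint Q (n+1) + Q ^ (n+1) * qint Q 1 := qint_add Q (n+1) 1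
      have h2 : qint Q (n + 1 + 1) = qint Q 1 + Q ^ 1 * qint Q (n+1) := by
        rw [← qint_add]; ring_nf
      rw [qint_one'] at h1 h2
      simp only [Nat.sub_zero]
      linear_combination h1 - h2
    | succ k =>
      by_cases hk : k < n
      · have e1 : n - k = n - (k+1) + 1 := by omega
        conv_lhs => rw [qbinom_succ_succ, ih k, ih (k+1)]
        conv_rhs => rw [qbinom_succ_succ, qbinom_succ_succ]
        have e2 : n + 1 - (k+1) = n - k := by omega
        rw [e2, e1]
        ring
      · conv_lhs => rw [qbinom_succ_succ]
        rw [qbinom_eq_zero Q (show n+1 < k+2 by omega)]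
        by_cases hk2 : k = n
        · subst hk2
          have e : k + 1 - (k+1) = 0 := by omega
          rw [e]
          ring
        · rw [qbinom_eq_zero Q (show n+1 < k+1 by omega)]
          ring

lemma qint_mul_qbinom : ∀ r t : ℕ, qint Q (r - t) * qbinom Q r t = qint Q (t+1) * qbinom Q r (t+1) := by
  intro r
  induction r with
  | zero =>
    intro t
    cases t with
    | zero => simp [qint, qbinom]
    | succ t =>
      rw [qbinom_eq_zero Q (show 0 < t+1 by omega), qbinom_eq_zero Q (show 0 < t+2 by omega)]
      ring
  | succ r ih =>
    intro t
    cases t with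
    | zero =>
      rw [qbinom_zero_right, qbinom_one, qint_one', Nat.sub_zero]
      ring
    | succ t =>
      by_cases hrt : t < r
      · have e : r + 1 - (t+1) = r - t := by omega
        rw [e, qbinom_succ_succ, qbinom_succ_succ, mul_add, ih t, mul_add]
        have h3 := ih (t+1)
        have h4 : qint Q (r+1) = qint Q (t+1) + Q ^ (t+1) * qint Q (r-t) := by
          rw [← qint_add]; congr 1; omega
        have h5 : qint Q (r+1) = qint Q (t+2) + Q ^ (t+2) * qint Q (r-(t+1)) := by
          rw [← qint_add]; congr 1; omega
        linear_combination qbinom Q r (t+1) * (h5 - h4) + Q^(t+2) * h3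
      · -- r ≤ t
        have e : r + 1 - (t+1) = 0 := by omega
        rw [e, qbinom_succ_succ, qbinom_succ_succ,
          qbinom_eq_zero Q (show r < t+1 by omega), qbinom_eq_zero Q (show r < t+2 by omega)]
        by_cases hrt2 : r = t
        · subst hrt2
          simp [qint]
        · rw [qbinom_eq_zero Q (show r < t by omega)]
          simp [qint]

lemma qStirling2_eq_zero : ∀ {n k : ℕ}, n < k → qStirling2 Q n k = 0 := by
  intro n
  induction n with
  | zero => intro k hk; obtain ⟨m, rfl⟩ : ∃ m, k = m + 1 := ⟨k - 1, by omega⟩; rfl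
  | succ n ih =>
    intro k hk
    obtain ⟨m, rfl⟩ : ∃ m, k = m + 1 := ⟨k - 1, by omega⟩
    show qStirling2 Q n m + qint Q (m+1) * qStirling2 Q n (m+1) = 0
    rw [ih (by omega), ih (by omega)]; ring

lemma qStirling2_self : ∀ n : ℕ, qStirling2 Q n n = 1 := by
  intro n
  induction n with
  | zero => rfl
  | succ n ih =>
    show qStirling2 Q n n + qint Q (n+1) * qStirling2 Q n (n+1) = 1
    rw [ih, qStirling2_eq_zero Q (by omega)]; ring

lemma qfact_succ (m : ℕ) : qfact Q (m+1) = qfact Q m * qint Q (m+1) :=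
  Finset.prod_range_succ _ m

/-- Connection coefficients: `π_r · π_s = ∑_k Fco r s k · b^(r+s-k) · π_k`. -/
def Fco (r s k : ℕ) : R :=
  if k ≤ r + s then
    qbinom Q r (r+s-k) * qbinom Q s (r+s-k) * qfact Q (r+s-k) * Q ^ ((r+s-k).choose 2)
  else 0

lemma Fco_of_gt {r s k : ℕ} (h : r + s < k) : Fco Q r s k = 0 := if_neg (by omega)

lemma Fco_rec (r s k : ℕ) :
    Fco Q r (s+1) (k+1) = Fco Q r s k + (qint Q (k+1) - qint Q s) * Fco Q r s (k+1) := by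
  rcases lt_trichotomy (r + s) k with h | h | h
  · rw [Fco_of_gt Q (by omega), Fco_of_gt Q (by omega), Fco_of_gt Q (by omega)]
    ring
  · have e1 : r + (s+1) - (k+1) = 0 := by omega
    have e2 : r + s - k = 0 := by omega
    rw [Fco, Fco, if_pos (by omega : k+1 ≤ r+(s+1)), if_pos (by omega : k ≤ r+s), e1, e2,
      Fco_of_gt Q (by omega)]
    simp [qbinom_zero_right, qfact]
  · obtain ⟨t, ht⟩ : ∃ t, r + s = k + (t+1) := ⟨r + s - k - 1, by omega⟩
    have e1 : r + (s+1) - (k+1) = t+1 := by omega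
    have e2 : r + s - k = t+1 := by omega
    have e3 : r + s - (k+1) = t := by omega
    rw [Fco, Fco, Fco, if_pos (by omega : k+1 ≤ r+(s+1)), if_pos (by omega : k ≤ r+s),
      if_pos (by omega : k+1 ≤ r+s), e1, e2, e3]
    by_cases hs : s < t
    · -- s < t : everything vanishes
      rw [qbinom_eq_zero Q (show s+1 < t+1 by omega), qbinom_eq_zero Q (show s < t+1 by omega),
        qbinom_eq_zero Q (show s < t by omega)]
      ring
    by_cases hr : r ≤ t
    · rcases eq_or_lt_of_le hr with hr2 | hr2
      · -- t = r : first terms vanish, and [k+1] = [s]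
        rw [qbinom_eq_zero Q (show r < t+1 by omega)]
        have e4 : k + 1 = s := by omega
        rw [e4, sub_self]
        ring
      · rw [qbinom_eq_zero Q (show r < t+1 by omega), qbinom_eq_zero Q (show r < t by omega)]
        ring
    -- main case : t < r, t ≤ s
    push_neg at hs hr
    have hp : qbinom Q (s+1) (t+1) = qbinom Q s (t+1) + Q ^ (s-t) * qbinom Q s t :=
      pascal2 Q s t
    have hf : qfact Q (t+1) = qfact Q t * qint Q (t+1) := qfact_succ Q t
    have hq : Q ^ ((t+1).choose 2) = Q ^ (t.choose 2) * Q ^ t := by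
      rw [← pow_add]
      congr 1
      rw [Nat.choose_succ_succ]
      simp [Nat.choose_one_right]
      omega
    have hk1 : qint Q (k+1) = qint Q s + Q ^ s * qint Q (r-t) := by
      rw [← qint_add]; congr 1; omega
    have hqs : Q ^ (s-t) * Q ^ t = Q ^ s := by rw [← pow_add]; congr 1; omega
    have hm := qint_mul_qbinom Q r t
    have hcomb : Q ^ (s-t) * Q ^ t * (qint Q (t+1) * qbinom Q r (t+1))
        = Q ^ s * (qint Q (r-t) * qbinom Q r t) := by rw [hqs, ← hm]
    rw [hp, hf, hq, hk1]
    linear_combination (qfact Q t * Q ^ (t.choose 2) * qbinom Q s t) * hcomb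

lemma qint_zero : qint Q 0 = 0 := by simp [qint]

lemma Fco_succ_zero (r s : ℕ) : Fco Q r (s+1) 0 = 0 := by
  rw [Fco, if_pos (by omega), qbinom_eq_zero Q (show r < r + (s+1) - 0 by omega)]
  ring

lemma Fco_r0 (r k : ℕ) : Fco Q r 0 k = if r = k then 1 else 0 := by
  rcases lt_trichotomy r k with h | h | h
  · rw [Fco_of_gt Q (by omega), if_neg (by omega)]
  · subst h
    rw [Fco, if_pos (by omega), Nat.add_zero, Nat.sub_self, if_pos rfl]
    simp [qbinom_zero_right, qfact]
  · rw [Fco, if_pos (by omega), Nat.add_zero, if_neg (by omega),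
      qbinom_eq_zero Q (show 0 < r - k by omega)]
    ring

lemma starK : ∀ (j i k : ℕ), qStirling2 Q (i+j) k =
    ∑ r ∈ Finset.range (i+1), qStirling2 Q i r *
      ∑ s ∈ Finset.range (j+1), qStirling2 Q j s * Fco Q r s k := by
  intro j
  induction j with
  | zero =>
    intro i k
    simp only [Nat.add_zero, zero_add, Finset.sum_range_one]
    rw [show qStirling2 Q 0 0 = (1:R) from rfl]
    simp only [one_mul, Fco_r0, mul_ite, mul_one, mul_zero]
    rw [Finset.sum_ite_eq' (Finset.range (i+1)) k (fun r => qStirling2 Q i r)]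
    by_cases hk : k ∈ Finset.range (i+1)
    · rw [if_pos hk]
    · rw [if_neg hk, qStirling2_eq_zero Q (by simpa using hk)]
  | succ j ih =>
    intro i k
    cases k with
    | zero =>
      rw [show qStirling2 Q (i+(j+1)) 0 = (0:R) from rfl]
      have hin0 : ∀ r ∈ Finset.range (i+1),
          qStirling2 Q i r * ∑ s ∈ Finset.range (j+1+1), qStirling2 Q (j+1) s * Fco Q r s 0 = 0 := by
        intro r _
        have : ∑ s ∈ Finset.range (j+1+1), qStirling2 Q (j+1) s * Fco Q r s 0 = 0 := by
          apply Finset.sum_eq_zero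
          intro s _
          cases s with
          | zero => rw [show qStirling2 Q (j+1) 0 = (0:R) from rfl]; ring
          | succ s => rw [Fco_succ_zero]; ring
        rw [this, mul_zero]
      rw [Finset.sum_eq_zero hin0]
    | succ k =>
      have hin : ∀ r : ℕ,
          ∑ s ∈ Finset.range (j+1+1), qStirling2 Q (j+1) s * Fco Q r s (k+1)
          = (∑ s ∈ Finset.range (j+1), qStirling2 Q j s * Fco Q r s k)
            + qint Q (k+1) * ∑ s ∈ Finset.range (j+1), qStirling2 Q j s * Fco Q r s (k+1) := by
        intro r
        rw [Finset.sum_range_succ']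
        rw [show qStirling2 Q (j+1) 0 = (0:R) from rfl, zero_mul, add_zero]
        have step : ∀ s, qStirling2 Q (j+1) (s+1) * Fco Q r (s+1) (k+1)
            = (qStirling2 Q j s * Fco Q r s k
               + qint Q (k+1) * (qStirling2 Q j s * Fco Q r s (k+1)))
              + ((qint Q (s+1) * qStirling2 Q j (s+1) * Fco Q r (s+1) (k+1))
                 - qint Q s * qStirling2 Q j s * Fco Q r s (k+1)) := by
          intro s
          rw [show qStirling2 Q (j+1) (s+1)
              = qStirling2 Q j s + qint Q (s+1) * qStirling2 Q j (s+1) from rfl, Fco_rec]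
          ring
        rw [Finset.sum_congr rfl (fun s _ => step s), Finset.sum_add_distrib,
          Finset.sum_range_sub (fun s => qint Q s * qStirling2 Q j s * Fco Q r s (k+1)),
          qStirling2_eq_zero Q (show j < j+1 by omega), qint_zero]
        rw [Finset.sum_add_distrib, ← Finset.mul_sum]
        ring
      have main : ∑ r ∈ Finset.range (i+1), qStirling2 Q i r *
            ∑ s ∈ Finset.range (j+1+1), qStirling2 Q (j+1) s * Fco Q r s (k+1)
          = (∑ r ∈ Finset.range (i+1), qStirling2 Q i r *
              ∑ s ∈ Finset.range (j+1), qStirling2 Q j s * Fco Q r s k)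
            + qint Q (k+1) * ∑ r ∈ Finset.range (i+1), qStirling2 Q i r *
              ∑ s ∈ Finset.range (j+1), qStirling2 Q j s * Fco Q r s (k+1) := by
        rw [Finset.sum_congr rfl (fun r _ => by rw [hin r])]
        rw [show (∑ r ∈ Finset.range (i+1), qStirling2 Q i r *
            ((∑ s ∈ Finset.range (j+1), qStirling2 Q j s * Fco Q r s k)
              + qint Q (k+1) * ∑ s ∈ Finset.range (j+1), qStirling2 Q j s * Fco Q r s (k+1)))
          = ∑ r ∈ Finset.range (i+1), ((qStirling2 Q i r *
              ∑ s ∈ Finset.range (j+1), qStirling2 Q j s * Fco Q r s k)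
              + qint Q (k+1) * (qStirling2 Q i r *
                ∑ s ∈ Finset.range (j+1), qStirling2 Q j s * Fco Q r s (k+1)))
          from Finset.sum_congr rfl (fun r _ => by ring)]
        rw [Finset.sum_add_distrib, ← Finset.mul_sum]
      rw [main, ← ih i k, ← ih i (k+1)]
      rfl

lemma hmain (a b : R) {n i j : ℕ} (hi : i < n) (hj : j < n) :
    ∑ k ∈ Finset.range (i+j+1), qStirling2 Q (i+j) k * a^k * b^(i+j-k)
    = ∑ s ∈ Finset.range n, (∑ r ∈ Finset.range n, (qStirling2 Q i r * b^(i-r)) *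
        (∑ k ∈ Finset.range (r+s+1), Fco Q r s k * a^k * b^(r+s-k))) *
        (qStirling2 Q j s * b^(j-s)) := by
  have hL : ∑ k ∈ Finset.range (i+j+1), qStirling2 Q (i+j) k * a^k * b^(i+j-k)
      = ∑ r ∈ Finset.range (i+1), ∑ s ∈ Finset.range (j+1), ∑ k ∈ Finset.range (i+j+1),
          qStirling2 Q i r * qStirling2 Q j s * Fco Q r s k * a^k * b^(i+j-k) := by
    have h1 : ∑ k ∈ Finset.range (i+j+1), qStirling2 Q (i+j) k * a^k * b^(i+j-k)
        = ∑ k ∈ Finset.range (i+j+1), ∑ r ∈ Finset.range (i+1), ∑ s ∈ Finset.range (j+1),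
            qStirling2 Q i r * qStirling2 Q j s * Fco Q r s k * a^k * b^(i+j-k) := by
      refine Finset.sum_congr rfl fun k _ => ?_
      rw [starK Q j i k]
      simp only [Finset.sum_mul, Finset.mul_sum]
      refine Finset.sum_congr rfl fun r _ => Finset.sum_congr rfl fun s _ => by ring
    rw [h1, Finset.sum_comm]
    exact Finset.sum_congr rfl fun r _ => Finset.sum_comm
  have hM : (∑ s ∈ Finset.range n, (∑ r ∈ Finset.range n, (qStirling2 Q i r * b^(i-r)) *
        (∑ k ∈ Finset.range (r+s+1), Fco Q r s k * a^k * b^(r+s-k))) *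
        (qStirling2 Q j s * b^(j-s)))
      = ∑ r ∈ Finset.range (i+1), ∑ s ∈ Finset.range (j+1), ∑ k ∈ Finset.range (i+j+1),
          qStirling2 Q i r * qStirling2 Q j s * Fco Q r s k * a^k * b^(i+j-k) := by
    -- shrink the s-range
    rw [← Finset.sum_subset (Finset.range_subset_range.2 (show j+1 ≤ n by omega))
      (fun s _ hs => by
        rw [qStirling2_eq_zero Q (show j < s by simpa using hs)]; ring)]
    -- shrink the r-range inside
    have h2 : ∀ s ∈ Finset.range (j+1),
        (∑ r ∈ Finset.range n, (qStirling2 Q i r * b^(i-r)) *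
          (∑ k ∈ Finset.range (r+s+1), Fco Q r s k * a^k * b^(r+s-k))) *
          (qStirling2 Q j s * b^(j-s))
        = ∑ r ∈ Finset.range (i+1), ((qStirling2 Q i r * b^(i-r)) *
            (∑ k ∈ Finset.range (r+s+1), Fco Q r s k * a^k * b^(r+s-k))) *
            (qStirling2 Q j s * b^(j-s)) := by
      intro s _
      rw [← Finset.sum_subset (Finset.range_subset_range.2 (show i+1 ≤ n by omega))
        (fun r _ hr => by
          rw [qStirling2_eq_zero Q (show i < r by simpa using hr)]; ring), Finset.sum_mul]
    rw [Finset.sum_congr rfl h2, Finset.sum_comm]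
    -- now per (r,s) : expand the k-sum
    refine Finset.sum_congr rfl fun r hr => Finset.sum_congr rfl fun s hs => ?_
    rw [Finset.mem_range] at hr hs
    have h3 : ((qStirling2 Q i r * b^(i-r)) *
          (∑ k ∈ Finset.range (r+s+1), Fco Q r s k * a^k * b^(r+s-k))) *
          (qStirling2 Q j s * b^(j-s))
        = ∑ k ∈ Finset.range (r+s+1),
            qStirling2 Q i r * qStirling2 Q j s * Fco Q r s k * a^k * b^(i+j-k) := by
      rw [Finset.mul_sum, Finset.sum_mul]
      refine Finset.sum_congr rfl fun k hk => ?_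
      rw [Finset.mem_range] at hk
      have hb : b^(i-r) * b^(r+s-k) * b^(j-s) = b^(i+j-k) := by
        rw [← pow_add, ← pow_add]; congr 1; omega
      calc (qStirling2 Q i r * b^(i-r)) * (Fco Q r s k * a^k * b^(r+s-k)) *
            (qStirling2 Q j s * b^(j-s))
          = (qStirling2 Q i r * qStirling2 Q j s * Fco Q r s k * a^k) *
            (b^(i-r) * b^(r+s-k) * b^(j-s)) := by ring
        _ = _ := by rw [hb]
    rw [h3]
    exact Finset.sum_subset (Finset.range_subset_range.2 (by omega))
      (fun k _ hk => by
        rw [Fco_of_gt Q (show r + s < k by simpa using hk)]; ring)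
  rw [hL, hM]

lemma sum_range_choose_one (n : ℕ) : ∑ m ∈ Finset.range n, m = n.choose 2 := by
  induction n with
  | zero => rfl
  | succ n ih =>
    rw [Finset.sum_range_succ, ih, show (n+1).choose 2 = n.choose 1 + n.choose 2 from rfl,
      Nat.choose_one_right]
    omega

lemma sum_range_choose_two (n : ℕ) : ∑ m ∈ Finset.range n, m.choose 2 = n.choose 3 := by
  induction n with
  | zero => rfl
  | succ n ih =>
    rw [Finset.sum_range_succ, ih, show (n+1).choose 3 = n.choose 2 + n.choose 3 from rfl]
    omega

lemma hankel_key (a b : R) (n : ℕ) :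
    (Matrix.of fun i j : Fin n =>
        ∑ k ∈ Finset.range ((i : ℕ) + (j : ℕ) + 1),
          qStirling2 Q ((i : ℕ) + (j : ℕ)) k * a ^ k * b ^ ((i : ℕ) + (j : ℕ) - k)).det =
      b ^ n.choose 2 * a ^ n.choose 2 * Q ^ n.choose 3 *
        ∏ j ∈ Finset.range n, qfact Q j := by
  set A : Matrix (Fin n) (Fin n) R :=
    Matrix.of fun i r : Fin n => qStirling2 Q i r * b ^ ((i : ℕ) - (r : ℕ)) with hA
  set B : Matrix (Fin n) (Fin n) R :=
    Matrix.of fun r m : Fin n => qbinom Q r m * a ^ ((r : ℕ) - (m : ℕ)) with hB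
  set D : Matrix (Fin n) (Fin n) R :=
    Matrix.diagonal (fun m : Fin n =>
      qfact Q m * Q ^ ((m : ℕ).choose 2) * a ^ (m : ℕ) * b ^ (m : ℕ)) with hD
  have hC : ∀ r s : Fin n, (B * D * Bᵀ) r s
      = ∑ k ∈ Finset.range ((r : ℕ) + (s : ℕ) + 1),
          Fco Q r s k * a ^ k * b ^ ((r : ℕ) + (s : ℕ) - k) := by
    intro r s
    rw [Matrix.mul_apply]
    have e1 : ∀ m : Fin n, (B * D) r m * Bᵀ m s
        = (qbinom Q r m * a ^ ((r : ℕ) - (m : ℕ)))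
          * (qfact Q m * Q ^ ((m : ℕ).choose 2) * a ^ (m : ℕ) * b ^ (m : ℕ))
          * (qbinom Q s m * a ^ ((s : ℕ) - (m : ℕ))) := by
      intro m
      rw [Matrix.mul_diagonal, Matrix.transpose_apply]
      rfl
    rw [Finset.sum_congr rfl fun m _ => e1 m]
    rw [Fin.sum_univ_eq_sum_range (fun m =>
      (qbinom Q r m * a ^ ((r : ℕ) - m))
        * (qfact Q m * Q ^ (m.choose 2) * a ^ m * b ^ m)
        * (qbinom Q s m * a ^ ((s : ℕ) - m))) n]
    -- reflect the RHS k-sum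
    conv_rhs => rw [← Finset.sum_range_reflect]
    have e2 : ∀ k ∈ Finset.range ((r:ℕ)+(s:ℕ)+1),
        Fco Q r s ((r:ℕ)+(s:ℕ)+1-1-k) * a ^ ((r:ℕ)+(s:ℕ)+1-1-k)
          * b ^ ((r:ℕ)+(s:ℕ)-((r:ℕ)+(s:ℕ)+1-1-k))
        = qbinom Q r k * qbinom Q s k * qfact Q k * Q ^ (k.choose 2)
          * a ^ ((r:ℕ)+(s:ℕ)-k) * b ^ k := by
      intro k hk
      rw [Finset.mem_range] at hk
      have e3 : (r:ℕ)+(s:ℕ)+1-1-k = (r:ℕ)+(s:ℕ)-k := by omega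
      have e4 : (r:ℕ)+(s:ℕ)-((r:ℕ)+(s:ℕ)-k) = k := by omega
      rw [e3, e4, Fco, if_pos (by omega)]
      rw [show (r:ℕ)+(s:ℕ)-((r:ℕ)+(s:ℕ)-k) = k from e4]
    rw [Finset.sum_congr rfl e2]
    -- both sides now sums of the same terms over different ranges; shrink both to range (r+1)
    have hsh : ∀ (N : ℕ), (r:ℕ)+1 ≤ N →
        ∑ m ∈ Finset.range N,
          (qbinom Q r m * a ^ ((r : ℕ) - m))
            * (qfact Q m * Q ^ (m.choose 2) * a ^ m * b ^ m)
            * (qbinom Q s m * a ^ ((s : ℕ) - m))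
        = ∑ m ∈ Finset.range ((r:ℕ)+1),
          (qbinom Q r m * a ^ ((r : ℕ) - m))
            * (qfact Q m * Q ^ (m.choose 2) * a ^ m * b ^ m)
            * (qbinom Q s m * a ^ ((s : ℕ) - m)) := by
      intro N hN
      exact (Finset.sum_subset (Finset.range_subset_range.2 hN)
        (fun m _ hm => by
          rw [qbinom_eq_zero Q (show (r:ℕ) < m by simpa using hm)]; ring)).symm
    have hsh2 : ∀ (N : ℕ), (r:ℕ)+1 ≤ N →
        ∑ k ∈ Finset.range N,
          qbinom Q r k * qbinom Q s k * qfact Q k * Q ^ (k.choose 2)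
            * a ^ ((r:ℕ)+(s:ℕ)-k) * b ^ k
        = ∑ k ∈ Finset.range ((r:ℕ)+1),
          qbinom Q r k * qbinom Q s k * qfact Q k * Q ^ (k.choose 2)
            * a ^ ((r:ℕ)+(s:ℕ)-k) * b ^ k := by
      intro N hN
      exact (Finset.sum_subset (Finset.range_subset_range.2 hN)
        (fun m _ hm => by
          rw [qbinom_eq_zero Q (show (r:ℕ) < m by simpa using hm)]; ring)).symm
    rw [hsh n r.isLt, hsh2 ((r:ℕ)+(s:ℕ)+1) (by omega)]
    refine Finset.sum_congr rfl fun m hm => ?_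
    rw [Finset.mem_range] at hm
    by_cases hms : m ≤ (s:ℕ)
    · have ha : a ^ ((r:ℕ) - m) * (a ^ m * a ^ ((s:ℕ) - m)) = a ^ ((r:ℕ)+(s:ℕ)-m) := by
        rw [← pow_add, ← pow_add]; congr 1; omega
      calc (qbinom Q r m * a ^ ((r : ℕ) - m))
            * (qfact Q m * Q ^ (m.choose 2) * a ^ m * b ^ m)
            * (qbinom Q s m * a ^ ((s : ℕ) - m))
          = (qbinom Q r m * qbinom Q s m * qfact Q m * Q ^ (m.choose 2) * b ^ m)
            * (a ^ ((r:ℕ) - m) * (a ^ m * a ^ ((s:ℕ) - m))) := by ring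
        _ = _ := by rw [ha]; ring
    · rw [qbinom_eq_zero Q (show (s:ℕ) < m by omega)]
      ring
  have hMeq : (Matrix.of fun i j : Fin n =>
        ∑ k ∈ Finset.range ((i : ℕ) + (j : ℕ) + 1),
          qStirling2 Q ((i : ℕ) + (j : ℕ)) k * a ^ k * b ^ ((i : ℕ) + (j : ℕ) - k))
      = A * (B * D * Bᵀ) * Aᵀ := by
    ext i j
    rw [Matrix.mul_apply, Matrix.of_apply]
    have e5 : ∀ s : Fin n, (A * (B * D * Bᵀ)) i s * Aᵀ s j
        = (∑ r : Fin n, (qStirling2 Q i r * b ^ ((i:ℕ) - (r:ℕ)))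
            * ∑ k ∈ Finset.range ((r : ℕ) + (s : ℕ) + 1),
                Fco Q r s k * a ^ k * b ^ ((r : ℕ) + (s : ℕ) - k))
          * (qStirling2 Q j s * b ^ ((j:ℕ) - (s:ℕ))) := by
      intro s
      rw [Matrix.mul_apply, Matrix.transpose_apply]
      congr 1
      exact Finset.sum_congr rfl fun r _ => by rw [hC r s]; rfl
    rw [Finset.sum_congr rfl fun s _ => e5 s]
    rw [Fin.sum_univ_eq_sum_range (fun s =>
      (∑ r : Fin n, (qStirling2 Q i r * b ^ ((i:ℕ) - (r:ℕ)))
          * ∑ k ∈ Finset.range ((r : ℕ) + s + 1),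
              Fco Q r s k * a ^ k * b ^ ((r : ℕ) + s - k))
        * (qStirling2 Q j s * b ^ ((j:ℕ) - s))) n]
    have e6 : ∀ sv ∈ Finset.range n,
        (∑ r : Fin n, (qStirling2 Q i r * b ^ ((i:ℕ) - (r:ℕ)))
            * ∑ k ∈ Finset.range ((r : ℕ) + sv + 1),
                Fco Q r sv k * a ^ k * b ^ ((r : ℕ) + sv - k))
          * (qStirling2 Q j sv * b ^ ((j:ℕ) - sv))
        = (∑ r ∈ Finset.range n, (qStirling2 Q i r * b ^ ((i:ℕ) - r))
            * ∑ k ∈ Finset.range (r + sv + 1),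
                Fco Q r sv k * a ^ k * b ^ (r + sv - k))
          * (qStirling2 Q j sv * b ^ ((j:ℕ) - sv)) := by
      intro sv _
      congr 1
      exact Fin.sum_univ_eq_sum_range (fun r =>
        (qStirling2 Q i r * b ^ ((i:ℕ) - r))
          * ∑ k ∈ Finset.range (r + sv + 1),
              Fco Q r sv k * a ^ k * b ^ (r + sv - k)) n
    rw [Finset.sum_congr rfl e6]
    exact hmain Q a b i.isLt j.isLt
  rw [hMeq]
  have detA : A.det = 1 := by
    rw [Matrix.det_of_lowerTriangular A
      (fun i j hij => by
        rw [hA, Matrix.of_apply, qStirling2_eq_zero Q (show (i:ℕ) < (j:ℕ) from hij)]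
        ring)]
    rw [Finset.prod_congr rfl fun i _ => by
      rw [hA, Matrix.of_apply, qStirling2_self, Nat.sub_self, pow_zero, one_mul]]
    exact Finset.prod_const_one
  have detB : B.det = 1 := by
    rw [Matrix.det_of_lowerTriangular B
      (fun r m hrm => by
        rw [hB, Matrix.of_apply, qbinom_eq_zero Q (show (r:ℕ) < (m:ℕ) from hrm)]
        ring)]
    rw [Finset.prod_congr rfl fun r _ => by
      rw [hB, Matrix.of_apply, qbinom_self, Nat.sub_self, pow_zero, one_mul]]
    exact Finset.prod_const_one
  have detD : D.det = b ^ n.choose 2 * a ^ n.choose 2 * Q ^ n.choose 3 *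
      ∏ j ∈ Finset.range n, qfact Q j := by
    rw [hD, Matrix.det_diagonal]
    rw [Fin.prod_univ_eq_prod_range (fun m =>
      qfact Q m * Q ^ (m.choose 2) * a ^ m * b ^ m) n]
    rw [Finset.prod_mul_distrib, Finset.prod_mul_distrib, Finset.prod_mul_distrib]
    rw [Finset.prod_pow_eq_pow_sum, Finset.prod_pow_eq_pow_sum, Finset.prod_pow_eq_pow_sum]
    rw [sum_range_choose_one, sum_range_choose_two]
    ring
  rw [Matrix.det_mul, Matrix.det_mul, Matrix.det_mul, Matrix.det_mul,
    Matrix.det_transpose, Matrix.det_transpose, detA, detB, detD]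
  ring

end HankelAux

/-- Hankel determinant of `ψ_n(x,c) = ∑_k S[n,k;q^c] x^(kc) [c]^(n-k)`. -/
theorem hankel_det_psi {F : Type*} [Field F] (q x : F) (c : ℕ) (hc : 1 ≤ c) (n : ℕ) :
    (Matrix.of fun i j : Fin n =>
        ∑ k ∈ Finset.range ((i : ℕ) + (j : ℕ) + 1),
          qStirling2 (q ^ c) ((i : ℕ) + (j : ℕ)) k * x ^ (k * c) *
            (qint q c) ^ ((i : ℕ) + (j : ℕ) - k)).det =
      (qint q c) ^ n.choose 2 * x ^ (c * n.choose 2) * q ^ (c * n.choose 3) *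
        ∏ j ∈ Finset.range n, qfact (q ^ c) j := by
  have h := hankel_key (q ^ c) (x ^ c) (qint q c) n
  have hM : (Matrix.of fun i j : Fin n =>
      ∑ k ∈ Finset.range ((i : ℕ) + (j : ℕ) + 1),
        qStirling2 (q ^ c) ((i : ℕ) + (j : ℕ)) k * x ^ (k * c) *
          (qint q c) ^ ((i : ℕ) + (j : ℕ) - k))
      = (Matrix.of fun i j : Fin n =>
      ∑ k ∈ Finset.range ((i : ℕ) + (j : ℕ) + 1),
        qStirling2 (q ^ c) ((i : ℕ) + (j : ℕ)) k * (x ^ c) ^ k *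
          (qint q c) ^ ((i : ℕ) + (j : ℕ) - k)) := by
    ext i j
    simp only [Matrix.of_apply]
    refine Finset.sum_congr rfl fun k _ => ?_
    rw [← pow_mul, mul_comm c k]
  rw [hM, h, ← pow_mul, ← pow_mul]
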